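/- Let L_A be an invertible real m×m matrix and L_B an invertible real n×n matrix, and set A = L_A L_Aᵀ and B = L_B L_Bᵀ. Let W* be a real n×m matrix and let M = L_Bᵀ W* L_A. Suppose W̃_r is a real n×m matrix with rank(W̃_r) ≤ r such that for every real n×m matrix Y with rank(Y) ≤ r one has ‖M − W̃_r‖_F ≤ ‖M − Y‖_F. Define Ŵ_r = L_B⁻ᵀ W̃_r L_A⁻¹. Then rank(Ŵ_r) ≤ r, and for every real n×m matrix W with rank(W) ≤ r, vec(W* − Ŵ_r)ᵀ (B ⊗ A) vec(W* − Ŵ_r) ≤ vec(W* − W)ᵀ (B ⊗ A) vec(W* − W). -/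

import Mathlib

open Matrix Kronecker

/-- Row-major vectorization of a matrix: `vecM X (i, j) = X i j`. -/
def vecM {n m : Type*} (X : Matrix n m ℝ) : n × m → ℝ := fun p => X p.1 p.2

/-- Frobenius norm: `‖X‖_F = √(trace (Xᵀ * X))`. -/
noncomputable def frobNorm {n m : Type*} [Fintype n] [Fintype m] (X : Matrix n m ℝ) : ℝ :=
  Real.sqrt (Matrix.trace (Xᵀ * X))

/-!
With `A = L_A L_Aᵀ` and `B = L_B L_Bᵀ`, the weighted objective of `W` is
`‖L_Bᵀ (W* − W) L_A‖_F² = ‖M − L_Bᵀ W L_A‖_F²`. Since `W ↦ L_Bᵀ W L_A` does not increase rank,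
every competitor `W` of rank at most `r` yields a competitor `L_Bᵀ W L_A` for the unweighted
problem, and `Ŵ_r` is mapped back to `W̃_r`.
-/

/-- Mathlib's `Matrix.vec` stacks columns, so `vecM` is `vec` of the transpose. -/
theorem vecM_eq_vec_transpose {ι κ : Type*} (X : Matrix ι κ ℝ) : vecM X = vec Xᵀ := rfl

section

variable {ι ι' κ κ' : Type*} [Fintype ι] [Fintype κ]

theorem kronecker_mulVec_vecM (P : Matrix ι' ι ℝ) (Q : Matrix κ' κ ℝ) (X : Matrix ι κ ℝ) :
    (P ⊗ₖ Q) *ᵥ vecM X = vecM (P * X * Qᵀ) := by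
  rw [vecM_eq_vec_transpose, vecM_eq_vec_transpose, kronecker_mulVec_vec]
  simp only [transpose_mul, transpose_transpose, Matrix.mul_assoc]

theorem vecM_dotProduct_vecM (X Y : Matrix ι κ ℝ) : vecM X ⬝ᵥ vecM Y = trace (Xᵀ * Y) := by
  rw [vecM_eq_vec_transpose, vecM_eq_vec_transpose, vec_dotProduct_vec, transpose_transpose,
    trace_mul_comm, ← trace_transpose, transpose_mul, transpose_transpose]

theorem frobNorm_sq (X : Matrix ι κ ℝ) : frobNorm X ^ 2 = trace (Xᵀ * X) := by
  refine Real.sq_sqrt ?_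
  rw [← vecM_dotProduct_vecM]
  exact Finset.sum_nonneg fun _ _ => mul_self_nonneg _

variable [Fintype ι'] [Fintype κ']

theorem vecM_dotProduct_kronecker_mulVec_vecM (LB : Matrix ι ι' ℝ) (LA : Matrix κ κ' ℝ)
    (X : Matrix ι κ ℝ) :
    vecM X ⬝ᵥ (((LB * LBᵀ) ⊗ₖ (LA * LAᵀ)) *ᵥ vecM X) = frobNorm (LBᵀ * X * LA) ^ 2 := by
  rw [kronecker_mulVec_vecM, vecM_dotProduct_vecM, frobNorm_sq]
  calc trace (Xᵀ * (LB * LBᵀ * X * (LA * LAᵀ)ᵀ))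
      = trace ((Xᵀ * LB * LBᵀ * X * LA) * LAᵀ) := by
        simp only [transpose_mul, transpose_transpose, Matrix.mul_assoc]
    _ = trace (LAᵀ * (Xᵀ * LB * LBᵀ * X * LA)) := trace_mul_comm _ _
    _ = trace ((LBᵀ * X * LA)ᵀ * (LBᵀ * X * LA)) := by
        simp only [transpose_mul, transpose_transpose, Matrix.mul_assoc]

end

theorem Matrix.rank_mul_mul_le {ι ι' κ κ' R : Type*} [Fintype ι] [Fintype κ] [Fintype κ']
    [CommRing R] [StrongRankCondition R]
    (P : Matrix ι' ι R) (X : Matrix ι κ R) (Q : Matrix κ κ' R) : (P * X * Q).rank ≤ X.rank :=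
  (rank_mul_le_left _ _).trans (rank_mul_le_right _ _)

/-- If `W̃_r` is a best rank-`r` Frobenius approximation of
`M = L_Bᵀ W* L_A`, then `Ŵ_r = L_B⁻ᵀ W̃_r L_A⁻¹` has rank at most `r` and minimizes the
Fisher-weighted quadratic objective `vec(W* − W)ᵀ (B ⊗ A) vec(W* − W)` with
`A = L_A L_Aᵀ`, `B = L_B L_Bᵀ`, over all matrices `W` of rank at most `r`. -/
theorem stmt_0 {m n : ℕ} (r : ℕ)
    (LA : Matrix (Fin m) (Fin m) ℝ) (LB : Matrix (Fin n) (Fin n) ℝ)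
    (hLA : IsUnit LA.det) (hLB : IsUnit LB.det)
    (Wstar Wtil : Matrix (Fin n) (Fin m) ℝ)
    (hrank : Wtil.rank ≤ r)
    (hopt : ∀ Y : Matrix (Fin n) (Fin m) ℝ, Y.rank ≤ r →
      frobNorm (LBᵀ * Wstar * LA - Wtil) ≤ frobNorm (LBᵀ * Wstar * LA - Y)) :
    ((LBᵀ)⁻¹ * Wtil * LA⁻¹).rank ≤ r ∧
    ∀ W : Matrix (Fin n) (Fin m) ℝ, W.rank ≤ r →
      vecM (Wstar - (LBᵀ)⁻¹ * Wtil * LA⁻¹) ⬝ᵥ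
        (((LB * LBᵀ) ⊗ₖ (LA * LAᵀ)) *ᵥ vecM (Wstar - (LBᵀ)⁻¹ * Wtil * LA⁻¹)) ≤
      vecM (Wstar - W) ⬝ᵥ (((LB * LBᵀ) ⊗ₖ (LA * LAᵀ)) *ᵥ vecM (Wstar - W)) := by
  refine ⟨(rank_mul_mul_le _ _ _).trans hrank, fun W hW => ?_⟩
  have hLBt : IsUnit LBᵀ.det := by rwa [det_transpose]
  have hWtil : LBᵀ * ((LBᵀ)⁻¹ * Wtil * LA⁻¹) * LA = Wtil := by
    rw [← Matrix.mul_assoc, ← Matrix.mul_assoc, mul_nonsing_inv _ hLBt, Matrix.one_mul,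
      Matrix.mul_assoc, nonsing_inv_mul _ hLA, Matrix.mul_one]
  rw [vecM_dotProduct_kronecker_mulVec_vecM, vecM_dotProduct_kronecker_mulVec_vecM,
    Matrix.mul_sub, Matrix.sub_mul, hWtil, Matrix.mul_sub, Matrix.sub_mul]
  exact pow_le_pow_left₀ (Real.sqrt_nonneg _) (hopt _ ((rank_mul_mul_le _ _ _).trans hW)) 2
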